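/- Let n ≥ 1, c ∈ ℝ with c ≠ 0, x ∈ (-1,1), and let Q be a polynomial of degree n+1 with Q(x) = 0, Q'(1) = 1, Q'(-1) = -1, such that ∫_{-1}^{1} t^k [c(Q(t) - |t - x|) + 1] dt = 0 for all k = 0,1,...,n-1. Then ∫_{-1}^{1} [∂/∂t (Q(t) - |t - x|)]^2 dt = 2/c. -/

import Mathlib

/-!
Write `F t = Q t - |t - x|`; off `t = x` its derivative is `Q' - sign (t - x)` and its second
derivative is `Q''`. Integrating `F' * F'` by parts on `[-1, x]` and on `[x, 1]`, the boundary
terms vanish because `F x = Q x = 0` and `F' (±1) = 0`, so `∫ F'² = -∫ Q'' F`. As `deg Q'' < n`,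
the moment conditions give `∫ Q'' (c F + 1) = 0`, hence
`c ∫ Q'' F = -∫ Q'' = -(Q' 1 - Q' (-1)) = -2`.
-/

open MeasureTheory Set

theorem intervalIntegral.integral_ite_lt {E : Type*} [NormedAddCommGroup E] [NormedSpace ℝ E]
    {f g : ℝ → E} {a x b : ℝ} (hax : a ≤ x) (hxb : x ≤ b)
    (hf : IntervalIntegrable f volume a x) (hg : IntervalIntegrable g volume x b) :
    ∫ t in a..b, (if t < x then f t else g t) = (∫ t in a..x, f t) + ∫ t in x..b, g t := by
  have hleft : EqOn f (fun t => if t < x then f t else g t) (uIoo a x) := by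
    intro t ht
    rw [uIoo_of_le hax] at ht
    simp [ht.2]
  have hright : EqOn g (fun t => if t < x then f t else g t) (uIoo x b) := by
    intro t ht
    rw [uIoo_of_le hxb] at ht
    simp [not_lt.2 ht.1.le]
  rw [← intervalIntegral.integral_add_adjacent_intervals (hf.congr_uIoo hleft)
    (hg.congr_uIoo hright), intervalIntegral.integral_congr_uIoo hleft,
    intervalIntegral.integral_congr_uIoo hright]

namespace Polynomial

theorem degree_derivative_derivative_lt {R : Type*} [Semiring R] {p : R[X]} {n : ℕ}
    (hp : p.natDegree ≤ n + 1) : (derivative (derivative p)).degree < n := by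
  refine (degree_lt_iff_coeff_zero _ _).2 fun m hm => ?_
  rw [coeff_derivative, coeff_derivative, coeff_eq_zero_of_natDegree_lt (by omega)]
  simp

theorem integral_eval_mul_eq_zero_of_degree_lt {g : ℝ → ℝ} {a b : ℝ} {n : ℕ}
    (hg : IntervalIntegrable g volume a b)
    (hmom : ∀ k < n, ∫ t in a..b, t ^ k * g t = 0) {p : ℝ[X]} (hp : p.degree < n) :
    ∫ t in a..b, p.eval t * g t = 0 := by
  have hint : ∀ k, IntervalIntegrable (fun t => t ^ k * g t) volume a b := fun k =>
    hg.continuousOn_mul (continuous_pow k).continuousOn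
  simp_rw [eval_eq_sum, sum_def, Finset.sum_mul, mul_assoc]
  rw [intervalIntegral.integral_finsetSum fun k _ => (hint k).const_mul _]
  refine Finset.sum_eq_zero fun k hk => ?_
  have hkn : k < n := by
    exact_mod_cast (le_degree_of_ne_zero (mem_support_iff.1 hk)).trans_lt hp
  rw [intervalIntegral.integral_const_mul, hmom k hkn, mul_zero]

theorem integral_derivative_derivative_mul_eq_of_moments {g : ℝ → ℝ} {a b c : ℝ} {n : ℕ}
    (hc : c ≠ 0) (hg : IntervalIntegrable g volume a b) {Q : ℝ[X]} (hQ : Q.natDegree ≤ n + 1)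
    (hmom : ∀ k < n, ∫ t in a..b, t ^ k * (c * g t + 1) = 0) :
    ∫ t in a..b, (derivative (derivative Q)).eval t * g t =
      -(((derivative Q).eval b - (derivative Q).eval a) / c) := by
  have hQ'' : IntervalIntegrable (fun t => (derivative (derivative Q)).eval t) volume a b :=
    (Polynomial.continuous _).intervalIntegrable _ _
  have horth := integral_eval_mul_eq_zero_of_degree_lt
    ((hg.const_mul c).add intervalIntegrable_const) hmom (degree_derivative_derivative_lt hQ)
  simp_rw [mul_add, mul_one, mul_left_comm _ c] at horth
  rw [intervalIntegral.integral_add ((hg.continuousOn_mul (Polynomial.continuousOn _)).const_mul c)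
    hQ'', intervalIntegral.integral_const_mul, intervalIntegral.integral_eq_sub_of_hasDerivAt
      (fun t _ => (derivative Q).hasDerivAt t) hQ''] at horth
  field_simp
  linarith

theorem integral_derivative_sub_const_sq (Q : ℝ[X]) {s x a b : ℝ}
    (ha : ((derivative Q).eval a - s) * (Q.eval a - s * (a - x)) = 0)
    (hb : ((derivative Q).eval b - s) * (Q.eval b - s * (b - x)) = 0) :
    ∫ t in a..b, ((derivative Q).eval t - s) ^ 2 =
      -∫ t in a..b, (derivative (derivative Q)).eval t * (Q.eval t - s * (t - x)) := by
  have hv : ∀ t, HasDerivAt (fun t => Q.eval t - s * (t - x)) ((derivative Q).eval t - s) t :=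
    fun t => ((Q.hasDerivAt t).sub (((hasDerivAt_id t).sub_const x).const_mul s)).congr_deriv
      (by rw [mul_one])
  have hu : ∀ t, HasDerivAt (fun t => (derivative Q).eval t - s)
      ((derivative (derivative Q)).eval t) t :=
    fun t => ((derivative Q).hasDerivAt t).sub_const s
  have hparts := intervalIntegral.integral_mul_deriv_eq_deriv_mul (a := a) (b := b)
    (fun t _ => hu t) (fun t _ => hv t) ((Polynomial.continuous _).intervalIntegrable _ _)
    (((Polynomial.continuous _).sub continuous_const).intervalIntegrable _ _)
  rw [ha, hb, sub_zero, zero_sub] at hparts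
  simpa only [sq] using hparts

theorem integral_derivative_sub_sign_sq (Q : ℝ[X]) {a x b : ℝ} (hax : a ≤ x) (hxb : x ≤ b)
    (hQx : Q.eval x = 0) (ha : (derivative Q).eval a = -1) (hb : (derivative Q).eval b = 1) :
    ∫ t in a..b, ((derivative Q).eval t - if t < x then -1 else 1) ^ 2 =
      -∫ t in a..b, (derivative (derivative Q)).eval t * (Q.eval t - |t - x|) := by
  have hint : ∀ {f : ℝ → ℝ} {a b : ℝ}, Continuous f → IntervalIntegrable f volume a b :=
    fun hf => hf.intervalIntegrable _ _
  have habs : ∀ t, |t - x| = (if t < x then -1 else 1) * (t - x) := fun t => by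
    split_ifs with ht
    · rw [abs_of_neg (sub_neg.2 ht)]; ring
    · rw [abs_of_nonneg (sub_nonneg.2 (not_lt.1 ht)), one_mul]
  calc _ = ∫ t in a..b, if t < x then ((derivative Q).eval t - -1) ^ 2
          else ((derivative Q).eval t - 1) ^ 2 := by
        congr 1; ext t; split_ifs <;> rfl
    _ = -((∫ t in a..x, (derivative (derivative Q)).eval t * (Q.eval t - -1 * (t - x)))
          + ∫ t in x..b, (derivative (derivative Q)).eval t * (Q.eval t - 1 * (t - x))) := by
        rw [intervalIntegral.integral_ite_lt hax hxb (hint (by fun_prop)) (hint (by fun_prop)),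
          integral_derivative_sub_const_sq Q (x := x) (by simp [ha]) (by simp [hQx]),
          integral_derivative_sub_const_sq Q (x := x) (by simp [hQx]) (by simp [hb]), neg_add]
    _ = -∫ t in a..b, (derivative (derivative Q)).eval t * (Q.eval t - |t - x|) := by
        rw [← intervalIntegral.integral_ite_lt hax hxb (hint (by fun_prop)) (hint (by fun_prop))]
        congr 2; ext t; rw [habs]; split_ifs <;> rfl

end Polynomial

theorem key_lemma (n : ℕ) (c x : ℝ) (hc : c ≠ 0)
    (hx : x ∈ Set.Ioo (-1:ℝ) 1)
    (Q : Polynomial ℝ) (hdeg : Q.natDegree = n + 1)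
    (hQx : Q.eval x = 0)
    (hQ1 : (Polynomial.derivative Q).eval 1 = 1)
    (hQm1 : (Polynomial.derivative Q).eval (-1) = -1)
    (hmom : ∀ k < n,
      (∫ t in (-1:ℝ)..1, t ^ k * (c * (Q.eval t - |t - x|) + 1)) = 0) :
    (∫ t in (-1:ℝ)..1,
      ((Polynomial.derivative Q).eval t - (if t < x then -1 else 1)) ^ 2) = 2 / c := by
  rw [Polynomial.integral_derivative_sub_sign_sq Q hx.1.le hx.2.le hQx hQm1 hQ1,
    Polynomial.integral_derivative_derivative_mul_eq_of_moments hc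
      ((by fun_prop : Continuous fun t => Q.eval t - |t - x|).intervalIntegrable _ _) hdeg.le hmom,
    hQ1, hQm1]
  ring
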